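/- arXiv:1305.2593 — 4 statements merged into one kernel-verified Lean document; each statement's English description precedes it below -/
import Mathlib

section
/- If τ is a formal power series in variables t^0, t^1, t^2, ... with τ(0) = 0 satisfying the Virasoro constraints L_m τ = 0 for all m ≥ -1, then τ = 0. Consequently the solution of the Virasoro constraints is unique up to a constant factor. -/
/-- The formal partial derivative `∂/∂t^p` acting on formal power series in the
variables `t^0, t^1, t^2, …`. -/
noncomputable def pd (p : ℕ) (f : MvPowerSeries ℕ ℂ) : MvPowerSeries ℕ ℂ :=
  fun n => ((n p : ℂ) + 1) * MvPowerSeries.coeff (n + Finsupp.single p 1) f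

/-- Interpret a coefficient function as a formal power series. -/
noncomputable def ofFun (g : (ℕ →₀ ℕ) → ℂ) : MvPowerSeries ℕ ℂ := g

/-- The Virasoro operators `L_m` (`m ≥ -1`) of two-dimensional gravity, acting on
formal power series in `t^0, t^1, …`.  For `m = -1` it is the string equation
operator, for `m ≥ 0` it is given by formula (2) of the paper, and for `m < -1`
we set it to `0`. -/
noncomputable def Vir (m : ℤ) (f : MvPowerSeries ℕ ℂ) : MvPowerSeries ℕ ℂ :=
  if m = -1 then
    ofFun (fun n => ∑ᶠ p : ℕ, MvPowerSeries.coeff n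
        (MvPowerSeries.X (p + 1) * pd p f))
      + (MvPowerSeries.C (σ := ℕ) (R := ℂ)) (1/2) * MvPowerSeries.X 0 ^ 2 * f - pd 0 f
  else if 0 ≤ m then
    (MvPowerSeries.C (σ := ℕ) (R := ℂ)) (1/2) *
      (∑ p ∈ Finset.range m.toNat,
        (MvPowerSeries.C (σ := ℕ) (R := ℂ))
          (((Nat.doubleFactorial (2*p+1) : ℂ) *
            (Nat.doubleFactorial (2*(m.toNat - 1 - p)+1) : ℂ)) / 2 ^ (m.toNat + 1)) *
          pd p (pd (m.toNat - 1 - p) f))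
    + ofFun (fun n => ∑ᶠ p : ℕ, MvPowerSeries.coeff n
        ((MvPowerSeries.C (σ := ℕ) (R := ℂ)) ((Nat.doubleFactorial (2*p+2*m.toNat+1) : ℂ) /
            (2 ^ (m.toNat + 1) * (Nat.doubleFactorial (2*p - 1) : ℂ))) *
          ((MvPowerSeries.X p : MvPowerSeries ℕ ℂ) - if p = 1 then 1 else 0) *
          pd (p + m.toNat) f))
    + (if m = 0 then (MvPowerSeries.C (σ := ℕ) (R := ℂ)) (1/16) * f else 0)
  else 0

/-!
Give `t^p` the weight `2p + 1`. Let `n` be a multi-index with `n_p ≠ 0` and `m = n - e_p`. In the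
coefficient of `t^m` in `L_{p-1} τ` the coefficient `τ_n` appears only through the shifted term
`-((2p+1)!!/2^p) ∂/∂t^p` (the `-∂/∂t^0` of `L_{-1}` for `p = 0`, the dilaton shift `-δ_{·,1}` of
`L_{p-1}` otherwise), with the nonzero factor `-((2p+1)!!/2^p) (m_p + 1)`; every other term only involves
coefficients of `τ` of smaller weight. So by induction on the weight all coefficients of a solution
vanish once `τ(0) = 0`. Since each `L_m` is linear, `τ₂ - (τ₂(0)/τ₁(0)) τ₁` is then zero for any two
solutions with `τ₁(0) ≠ 0`.
-/

open MvPowerSeries Finsupp Function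
open scoped Nat

theorem coeff_pd (p : ℕ) (f : MvPowerSeries ℕ ℂ) (n : ℕ →₀ ℕ) :
    coeff n (pd p f) = ((n p : ℂ) + 1) * coeff (n + single p 1) f := rfl

theorem pd_sub_smul (p : ℕ) (c : ℂ) (f g : MvPowerSeries ℕ ℂ) :
    pd p (f - c • g) = pd p f - c • pd p g := by
  ext n
  simp only [coeff_pd, map_sub, map_smul, smul_eq_mul]
  ring

theorem coeff_X_mul_eq_zero {σ R : Type*} [Semiring R] {n : σ →₀ ℕ} {j : σ} (h : n j = 0)
    (g : MvPowerSeries σ R) : coeff n (X j * g) = 0 := by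
  rw [X_def, coeff_monomial_mul, if_neg (by rw [single_le_iff]; omega)]

theorem coeff_ofFun (g : (ℕ →₀ ℕ) → ℂ) (n : ℕ →₀ ℕ) : coeff n (ofFun g) = g n := rfl

theorem finite_support_coeff_X_succ_mul (D : ℕ → MvPowerSeries ℕ ℂ) (n : ℕ →₀ ℕ) :
    (support fun p => coeff n (X (p + 1) * D p)).Finite :=
  (n.support.finite_toSet.preimage Nat.succ_injective.injOn).subset fun _ hp =>
    Finsupp.mem_support_iff.2 fun h => hp (coeff_X_mul_eq_zero h _)

theorem finite_support_coeff_dilaton (a : ℕ → ℂ) (D : ℕ → MvPowerSeries ℕ ℂ) (n : ℕ →₀ ℕ) :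
    (support fun p => coeff n (C (a p) * (X p - if p = 1 then 1 else 0) * D p)).Finite := by
  refine (n.support.finite_toSet.insert 1).subset fun p hp => ?_
  by_cases hp1 : p = 1
  · exact Or.inl hp1
  refine Or.inr (Finsupp.mem_support_iff.2 fun h => hp ?_)
  dsimp only
  rw [if_neg hp1, sub_zero, mul_comm (C _), mul_assoc, coeff_X_mul_eq_zero h]

theorem ofFun_finsum_coeff_sub_smul {F G : ℕ → MvPowerSeries ℕ ℂ}
    (hF : ∀ n, (support fun p => coeff n (F p)).Finite)
    (hG : ∀ n, (support fun p => coeff n (G p)).Finite) (c : ℂ) :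
    ofFun (fun n => ∑ᶠ p, coeff n (F p - c • G p)) =
      ofFun (fun n => ∑ᶠ p, coeff n (F p)) - c • ofFun (fun n => ∑ᶠ p, coeff n (G p)) := by
  ext n
  have hcG : (support fun p => c * coeff n (G p)).Finite :=
    (hG n).subset (support_mul_subset_right _ _)
  simp only [coeff_ofFun, map_sub, map_smul, smul_eq_mul]
  rw [finsum_sub_distrib (hF n) hcG, mul_finsum]

theorem Vir_sub_smul (k : ℤ) (c : ℂ) (f g : MvPowerSeries ℕ ℂ) :
    Vir k (f - c • g) = Vir k f - c • Vir k g := by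
  have hmul : ∀ a x y : MvPowerSeries ℕ ℂ, a * (x - c • y) = a * x - c • (a * y) :=
    fun _ _ _ => by rw [mul_sub, mul_smul_comm]
  unfold Vir
  split_ifs
  · simp only [pd_sub_smul, hmul]
    rw [ofFun_finsum_coeff_sub_smul (finite_support_coeff_X_succ_mul _)
      (finite_support_coeff_X_succ_mul _)]
    module
  iterate 2
    · simp only [pd_sub_smul, hmul, Finset.sum_sub_distrib, ← Finset.smul_sum]
      rw [ofFun_finsum_coeff_sub_smul (finite_support_coeff_dilaton _ _)
        (finite_support_coeff_dilaton _ _)]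
      module
  · rw [smul_zero, sub_zero]

theorem coeff_monomial_mul_eq_zero_of_weight_lt {σ R : Type*} [Semiring R] {w : σ → ℕ}
    {N : ℕ} {f : MvPowerSeries σ R} (hf : (N : ℕ∞) ≤ f.weightedOrder w) {m d : σ →₀ ℕ} (a : R)
    (h : weight w m < weight w d + N) : coeff m (monomial d a * f) = 0 := by
  rw [coeff_monomial_mul]
  split_ifs with hd
  · have hsplit := congrArg (weight w) (tsub_add_cancel_of_le hd)
    rw [map_add] at hsplit
    rw [coeff_eq_zero_of_lt_weightedOrder w ((Nat.cast_lt.2 (by omega)).trans_le hf), mul_zero]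
  · rfl

theorem natCast_sub_le_weightedOrder_pd {w : ℕ → ℕ} {N : ℕ} {f : MvPowerSeries ℕ ℂ}
    (hf : (N : ℕ∞) ≤ f.weightedOrder w) (i : ℕ) :
    ((N - w i : ℕ) : ℕ∞) ≤ (pd i f).weightedOrder w := by
  refine nat_le_weightedOrder w fun d hd => ?_
  have hlt : weight w (d + single i 1) < N := by
    rw [map_add, weight_single, one_smul]
    omega
  rw [coeff_pd, coeff_eq_zero_of_lt_weightedOrder w ((Nat.cast_lt.2 hlt).trans_le hf), mul_zero]

def tWeight (p : ℕ) : ℕ := 2 * p + 1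

theorem weight_tWeight_single (p r : ℕ) : weight tWeight (single p r) = r * (2 * p + 1) := by
  rw [weight_single, smul_eq_mul, tWeight]

section LeadingCoefficient

variable {τ : MvPowerSeries ℕ ℂ} {m n : ℕ →₀ ℕ}

theorem coeff_X_mul_pd_eq_zero (hτ : (weight tWeight n : ℕ∞) ≤ τ.weightedOrder tWeight)
    {i j : ℕ} (h : weight tWeight m + 2 * i + 1 < weight tWeight n + 2 * j + 1) :
    coeff m (X j * pd i τ) = 0 := by
  rw [X_def]
  refine coeff_monomial_mul_eq_zero_of_weight_lt (natCast_sub_le_weightedOrder_pd hτ i) 1 ?_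
  rw [weight_tWeight_single, tWeight]
  omega

theorem coeff_Vir_neg_one_of_le_weightedOrder
    (hτ : (weight tWeight n : ℕ∞) ≤ τ.weightedOrder tWeight) (hmn : m + single 0 1 = n) :
    coeff m (Vir (-1) τ) = -((m 0 : ℂ) + 1) * coeff n τ := by
  have hwt : weight tWeight n = weight tWeight m + 1 := by
    rw [← hmn, map_add, weight_tWeight_single]
  have hstring : ∀ p, coeff m (X (p + 1) * pd p τ) = 0 := fun p =>
    coeff_X_mul_pd_eq_zero hτ (by omega)
  have hsquare : coeff m (X 0 ^ 2 * τ) = 0 := by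
    rw [X_pow_eq]
    exact coeff_monomial_mul_eq_zero_of_weight_lt hτ 1 (by rw [weight_tWeight_single]; omega)
  rw [Vir, if_pos rfl, map_sub, map_add, mul_assoc, coeff_C_mul, coeff_ofFun,
    finsum_congr hstring, finsum_zero, hsquare, coeff_pd, hmn]
  ring

theorem coeff_Vir_natCast_of_le_weightedOrder
    (hτ : (weight tWeight n : ℕ∞) ≤ τ.weightedOrder tWeight) {q : ℕ}
    (hmn : m + single (q + 1) 1 = n) :
    coeff m (Vir q τ) = -((2 * q + 3)‼ / 2 ^ (q + 1) * ((m (q + 1) : ℂ) + 1)) * coeff n τ := by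
  have hwt : weight tWeight n = weight tWeight m + (2 * q + 3) := by
    rw [← hmn, map_add, weight_tWeight_single]
    ring
  have hquad : ∀ p ∈ Finset.range q, coeff m (pd p (pd (q - 1 - p) τ)) = 0 := by
    intro p hp
    refine coeff_eq_zero_of_lt_weightedOrder tWeight (lt_of_lt_of_le ?_
      (natCast_sub_le_weightedOrder_pd (natCast_sub_le_weightedOrder_pd hτ _) p))
    rw [Finset.mem_range] at hp
    simp only [tWeight, Nat.cast_lt]
    omega
  have hlin : ∀ p, coeff m (X p * pd (p + q) τ) = 0 := fun p =>
    coeff_X_mul_pd_eq_zero hτ (by omega)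
  have hconst : coeff m τ = 0 :=
    coeff_eq_zero_of_lt_weightedOrder tWeight ((Nat.cast_lt.2 (by omega)).trans_le hτ)
  rw [Vir, if_neg (by omega), if_pos (by omega), Int.toNat_natCast]
  simp only [map_add, map_sum, mul_assoc, coeff_C_mul, coeff_ofFun]
  have hcentral : coeff m (if (q : ℤ) = 0 then C (1 / 16) * τ else 0) = 0 := by
    split_ifs <;> simp [coeff_C_mul, hconst]
  rw [Finset.sum_eq_zero fun p hp => by rw [hquad p hp, mul_zero],
    finsum_eq_single _ 1 fun p hp => by rw [if_neg hp, sub_zero, hlin, mul_zero],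
    if_pos rfl, sub_mul, one_mul, map_sub, hlin, coeff_pd, add_comm 1 q, hmn, hcentral]
  norm_num [show 2 * 1 + 2 * q + 1 = 2 * q + 3 by ring]
  ring

end LeadingCoefficient

section Uniqueness

variable {τ : MvPowerSeries ℕ ℂ}

theorem coeff_eq_zero_of_Vir_eq_zero (h0 : constantCoeff τ = 0)
    (hVir : ∀ m : ℤ, -1 ≤ m → Vir m τ = 0) {n : ℕ →₀ ℕ}
    (hτ : (weight tWeight n : ℕ∞) ≤ τ.weightedOrder tWeight) : coeff n τ = 0 := by
  by_cases hn : n = 0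
  · rw [hn, coeff_zero_eq_constantCoeff_apply, h0]
  obtain ⟨p, hp⟩ : ∃ p, n p ≠ 0 := by
    by_contra! h
    exact hn (Finsupp.ext h)
  have hmn := sub_add_single_one_cancel hp
  cases p with
  | zero =>
    have h := coeff_Vir_neg_one_of_le_weightedOrder hτ hmn
    rw [hVir _ le_rfl, map_zero] at h
    exact (mul_eq_zero.1 h.symm).resolve_left (neg_ne_zero.2 (Nat.cast_add_one_ne_zero _))
  | succ q =>
    have h := coeff_Vir_natCast_of_le_weightedOrder hτ hmn
    rw [hVir _ (by omega), map_zero] at h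
    refine (mul_eq_zero.1 h.symm).resolve_left
      (neg_ne_zero.2 (mul_ne_zero (div_ne_zero ?_ (by norm_num)) (Nat.cast_add_one_ne_zero _)))
    exact_mod_cast (Nat.doubleFactorial_pos _).ne'

theorem eq_zero_of_Vir_eq_zero (h0 : constantCoeff τ = 0)
    (hVir : ∀ m : ℤ, -1 ≤ m → Vir m τ = 0) : τ = 0 := by
  have hord : ∀ N : ℕ, (N : ℕ∞) ≤ τ.weightedOrder tWeight := by
    intro N
    induction N with
    | zero => simp
    | succ N ih =>
      refine nat_le_weightedOrder tWeight fun n hn => ?_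
      rcases (Nat.lt_succ_iff.1 hn).lt_or_eq with hlt | rfl
      · exact coeff_eq_zero_of_lt_weightedOrder tWeight ((Nat.cast_lt.2 hlt).trans_le ih)
      · exact coeff_eq_zero_of_Vir_eq_zero h0 hVir ih
  rw [← weightedOrder_eq_top_iff tWeight, ← top_le_iff, ← ENat.forall_natCast_le_iff_le]
  exact fun N _ => hord N

theorem eq_smul_of_Vir_eq_zero {τ₁ τ₂ : MvPowerSeries ℕ ℂ}
    (h₁ : ∀ m : ℤ, -1 ≤ m → Vir m τ₁ = 0) (h₂ : ∀ m : ℤ, -1 ≤ m → Vir m τ₂ = 0)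
    (hc : constantCoeff τ₁ ≠ 0) : τ₂ = (constantCoeff τ₂ / constantCoeff τ₁) • τ₁ := by
  rw [← sub_eq_zero]
  refine eq_zero_of_Vir_eq_zero ?_ fun m hm => by
    rw [Vir_sub_smul, h₁ m hm, h₂ m hm, smul_zero, sub_zero]
  rw [map_sub, constantCoeff_smul, smul_eq_mul, div_mul_cancel₀ _ hc, sub_self]

end Uniqueness

/-- Uniqueness of the solution of the Virasoro constraints of two-dimensional
gravity: a formal power series `τ` with `τ(0) = 0` satisfying `L_m τ = 0` for all
`m ≥ -1` vanishes; consequently any two solutions of the Virasoro constraints are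
proportional, i.e. the solution is unique up to a constant factor. -/
theorem virasoro_constraints_uniqueness :
    (∀ τ : MvPowerSeries ℕ ℂ, (MvPowerSeries.constantCoeff (σ := ℕ) (R := ℂ)) τ = 0 →
      (∀ m : ℤ, -1 ≤ m → Vir m τ = 0) → τ = 0) ∧
    (∀ τ₁ τ₂ : MvPowerSeries ℕ ℂ,
      (∀ m : ℤ, -1 ≤ m → Vir m τ₁ = 0) → (∀ m : ℤ, -1 ≤ m → Vir m τ₂ = 0) →
      ∃ c : ℂ, τ₂ = c • τ₁ ∨ τ₁ = c • τ₂) := by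
  refine ⟨fun τ h0 hVir => eq_zero_of_Vir_eq_zero h0 hVir, fun τ₁ τ₂ h₁ h₂ => ?_⟩
  by_cases hc : constantCoeff τ₁ = 0
  · exact ⟨0, Or.inr (by rw [eq_zero_of_Vir_eq_zero hc h₁, zero_smul])⟩
  · exact ⟨_, Or.inl (eq_smul_of_Vir_eq_zero h₁ h₂ hc)⟩
end

section
/- Let Q be the root lattice of a simply-laced simple Lie algebra with Cartan form (·|·), and let σ be an invertible endomorphism of Q ⊗ C with 1 - σ invertible on Q ⊗ Q (i.e. 1 is not an eigenvalue of σ), such that ((1-σ)^{-1}α | β) ∈ Z for all α, β ∈ Q (e.g. σ a Coxeter transformation). Then the function ε(α, β) = (-1)^{((1-σ)^{-1}α | β)} is bimultiplicative and satisfies ε(α, α) = (-1)^{|α|²(|α|²+1)/2} for all α ∈ Q, where |α|² = (α|α). -/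
/-- Let `Q` be the root lattice of a simply-laced simple Lie algebra, realised as
an additive subgroup of `V = Q ⊗ ℂ` on which the Cartan form `B` takes integer
values and is even (`|α|² ∈ 2ℤ`), and let `σ` be an invertible endomorphism of
`V` preserving `B` such that `1 - σ` is invertible (with inverse `T`) and
`((1-σ)⁻¹ α | β) ∈ ℤ` for all `α, β ∈ Q` (e.g. a Coxeter transformation).  Then
`ε(α,β) = (-1)^{((1-σ)⁻¹α|β)}` is bimultiplicative on `Q` and satisfies
`ε(α,α) = (-1)^{|α|²(|α|²+1)/2}`. -/
theorem coxeter_cocycle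
    (V : Type*) [AddCommGroup V] [Module ℂ V] [FiniteDimensional ℂ V]
    (B : V →ₗ[ℂ] V →ₗ[ℂ] ℂ) (hBsymm : ∀ x y, B x y = B y x)
    (Q : AddSubgroup V)
    (heven : ∀ α ∈ Q, ∃ k : ℤ, B α α = 2 * k)
    (σ : V ≃ₗ[ℂ] V) (hσB : ∀ x y, B (σ x) (σ y) = B x y)
    (T : V ≃ₗ[ℂ] V) (hT : ∀ x, T x - σ (T x) = x)
    (N : V → V → ℤ) (hN : ∀ α ∈ Q, ∀ β ∈ Q, (N α β : ℂ) = B (T α) β)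
    (ε : V → V → ℂ) (hε : ∀ α β, ε α β = (-1 : ℂ) ^ (N α β)) :
    (∀ α ∈ Q, ∀ β ∈ Q, ∀ γ ∈ Q,
      ε (α + β) γ = ε α γ * ε β γ ∧ ε α (β + γ) = ε α β * ε α γ) ∧
    (∀ α ∈ Q, ∀ n : ℤ, B α α = (n : ℂ) →
      ε α α = (-1 : ℂ) ^ (n * (n + 1) / 2)) := by
  have hne : (-1 : ℂ) ≠ 0 := by norm_num
  constructor
  · intro α hα β hβ γ hγ
    have h1 : N (α + β) γ = N α γ + N β γ := by
      have : ((N (α + β) γ : ℤ) : ℂ) = ((N α γ + N β γ : ℤ) : ℂ) := by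
        push_cast
        rw [hN _ (Q.add_mem hα hβ) _ hγ, hN _ hα _ hγ, hN _ hβ _ hγ, map_add, map_add,
          LinearMap.add_apply]
      exact_mod_cast this
    have h2 : N α (β + γ) = N α β + N α γ := by
      have : ((N α (β + γ) : ℤ) : ℂ) = ((N α β + N α γ : ℤ) : ℂ) := by
        push_cast
        rw [hN _ hα _ (Q.add_mem hβ hγ), hN _ hα _ hβ, hN _ hα _ hγ, map_add]
      exact_mod_cast this
    refine ⟨?_, ?_⟩ <;> simp [hε, h1, h2, zpow_add₀ hne]
  · intro α hα n hn
    obtain ⟨k, hk⟩ := heven α hα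
    have hn2 : n = 2 * k := by
      have : ((n : ℤ) : ℂ) = ((2 * k : ℤ) : ℂ) := by push_cast; rw [← hn, hk]
      exact_mod_cast this
    have hα' : α = T α - σ (T α) := (hT α).symm
    have e1 : B (T α) α = B (T α) (T α) - B (T α) (σ (T α)) := by
      nth_rewrite 2 [hα']
      rw [map_sub]
    have e3 : B (σ (T α)) α = B (σ (T α)) (T α) - B (T α) (T α) := by
      nth_rewrite 2 [hα']
      rw [map_sub, hσB (T α) (T α)]
    have e2 : B α α = 2 * (B (T α) (T α) - B (T α) (σ (T α))) := by
      nth_rewrite 1 [hα']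
      rw [map_sub, LinearMap.sub_apply, e1, e3, hBsymm (σ (T α)) (T α)]
      ring
    have hkey : (2 : ℂ) * B (T α) α = B α α := by rw [e1, e2]
    have hNk : N α α = k := by
      have : ((N α α : ℤ) : ℂ) = ((k : ℤ) : ℂ) := by
        rw [hN α hα α hα]
        have : (2 : ℂ) * B (T α) α = 2 * k := by rw [hkey, hk]
        have h2 : (2 : ℂ) ≠ 0 := by norm_num
        field_simp at this
        exact_mod_cast this
      exact_mod_cast this
    subst hn2
    have hdiv : 2 * k * (2 * k + 1) / 2 = k + 2 * (k * k) := by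
      have h : 2 * k * (2 * k + 1) = (k + 2 * (k * k)) * 2 := by ring
      rw [h, Int.mul_ediv_cancel _ two_ne_zero]
    rw [hε, hNk, hdiv, zpow_add₀ hne, zpow_mul, show ((-1:ℂ)^(2:ℤ)) = 1 by norm_num,
      one_zpow, mul_one]
end

section
/- For the Heisenberg pairing function P^{ij}(μ,λ) = η_{ij} μ^{-m_i/h} λ^{-m_j/h} ((m_i/h)μ + (m_j/h)λ)/(μ-λ)², valid for |λ| < |μ|, setting s = μ - λ, one has the expansion P^{ij}(μ,λ) = η_{ij}/s² + Σ_{k≥0} P_k^{ij}(λ) s^k, where P_k^{ij}(λ) = η_{ij} (-1)^k (1 - m_i/h) · Γ(m_i/h + k + 1)/(k!(k+2)Γ(m_i/h)) · λ^{-k-2}. -/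
open Real

/-!
Put `a = m_i/h`, so that `m_j/h = 1 - a`, and `x = s/λ`. The propagator equals
`η s⁻² (1 + a x)(1 + x)^(-a)`, so the claim is the binomial series of `(1 + x)^(-a)`
multiplied by `1 + a x`: the coefficients of `x⁰` and `x¹` of the product are `1` and `0`, and
writing `binom(-a, n) = (-1)ⁿ Γ(a + n) / (n! Γ(a))` turns the coefficient of `x^(k+2)` into
`P_k λ^(k+2)`.
-/

theorem Ring.choose_succ_mul_succ {K : Type*} [Field K] [CharZero K] (r : K) (n : ℕ) :
    Ring.choose r (n + 1) * (n + 1) = Ring.choose r n * (r - n) := by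
  simp only [Ring.choose_eq_smul, descPochhammer_succ_right, smul_eq_mul, Polynomial.smeval_mul,
    Polynomial.smeval_sub, Polynomial.smeval_X, Polynomial.smeval_natCast, Nat.factorial_succ]
  push_cast
  field_simp
  ring

namespace Real

open Nat

theorem choose_neg_eq_Gamma {a : ℝ} (ha : ∀ m : ℕ, a ≠ -m) (n : ℕ) :
    Ring.choose (-a) n = (-1) ^ n * Gamma (a + n) / (n ! * Gamma a) := by
  have hΓ : Gamma a ≠ 0 := Gamma_ne_zero ha
  induction n with
  | zero => simp [hΓ]
  | succ n ih =>
    have hn : a + n ≠ 0 := fun h => ha n (by linarith)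
    have hstep : Ring.choose (-a) (n + 1) = Ring.choose (-a) n * (-a - n) / (n + 1) := by
      rw [eq_div_iff n.cast_add_one_ne_zero, Ring.choose_succ_mul_succ]
    rw [hstep, ih, cast_add_one, ← add_assoc, Gamma_add_one hn, factorial_succ]
    push_cast
    field_simp
    ring

theorem choose_neg_add_mul_choose_neg {a : ℝ} (ha : ∀ m : ℕ, a ≠ -m) (k : ℕ) :
    Ring.choose (-a) (k + 2) + a * Ring.choose (-a) (k + 1) =
      (-1) ^ k * (1 - a) * (Gamma (a + k + 1) / (k ! * (k + 2) * Gamma a)) := by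
  have hk : a + k + 1 ≠ 0 := fun h => ha (k + 1) (by push_cast; linarith)
  have hΓ : Gamma a ≠ 0 := Gamma_ne_zero ha
  rw [choose_neg_eq_Gamma ha, choose_neg_eq_Gamma ha, factorial_succ, factorial_succ]
  push_cast
  rw [show a + (k + 2) = a + k + 1 + 1 by ring, ← add_assoc, Gamma_add_one hk]
  field_simp
  ring

theorem hasSum_choose_mul_pow (p : ℝ) {x : ℝ} (hx : |x| < 1) :
    HasSum (fun n => Ring.choose p n * x ^ n) ((1 + x) ^ p) := by
  have hx' : x ∈ Metric.eball (0 : ℝ) 1 := by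
    rw [Metric.mem_eball, edist_zero_right, ← ofReal_norm, ENNReal.ofReal_lt_one]
    exact hx
  simpa [binomialSeries, FormalMultilinearSeries.ofScalars_apply_eq, mul_comm] using
    one_add_rpow_hasFPowerSeriesOnBall_zero.hasSum hx'

theorem hasSum_one_sub_mul_mul_one_add_rpow (p : ℝ) {x : ℝ} (hx : |x| < 1) :
    HasSum (fun n => (Ring.choose p (n + 2) - p * Ring.choose p (n + 1)) * x ^ (n + 2))
      ((1 - p * x) * (1 + x) ^ p - 1) := by
  have h := hasSum_choose_mul_pow p hx
  have h2 := (hasSum_nat_add_iff' 2).mpr h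
  have h1 := ((hasSum_nat_add_iff' 1).mpr h).mul_left (p * x)
  have hval : (1 - p * x) * (1 + x) ^ p - 1 =
      ((1 + x) ^ p - ∑ i ∈ Finset.range 2, Ring.choose p i * x ^ i) -
        p * x * ((1 + x) ^ p - ∑ i ∈ Finset.range 1, Ring.choose p i * x ^ i) := by
    simp only [Finset.sum_range_succ, Finset.sum_range_zero, Ring.choose_zero_right,
      Ring.choose_one_right]
    ring
  rw [hval]
  exact (h2.sub h1).congr_fun fun n => by ring

theorem add_rpow_neg_mul_rpow_neg_one_sub_mul_eq (a : ℝ) {lam s : ℝ} (hlam : 0 < lam)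
    (hs : 0 ≤ lam + s) :
    (lam + s) ^ (-a) * lam ^ (-(1 - a)) * (a * (lam + s) + (1 - a) * lam) =
      (1 + a * (s / lam)) * (1 + s / lam) ^ (-a) := by
  have hsplit : lam + s = lam * (1 + s / lam) := by field_simp
  have hpow : lam ^ (-a) * lam ^ (-(1 - a)) = lam⁻¹ := by
    rw [← rpow_add hlam, show -a + -(1 - a) = -1 by ring, rpow_neg_one]
  rw [hsplit, mul_rpow hlam.le (by rw [one_add_div hlam.ne']; exact div_nonneg hs hlam.le)]
  calc lam ^ (-a) * (1 + s / lam) ^ (-a) * lam ^ (-(1 - a)) *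
        (a * (lam * (1 + s / lam)) + (1 - a) * lam)
      = (lam ^ (-a) * lam ^ (-(1 - a))) * lam * ((1 + a * (s / lam)) * (1 + s / lam) ^ (-a)) := by
        ring
    _ = _ := by rw [hpow, inv_mul_cancel₀ hlam.ne', one_mul]

end Real

theorem propagator_expansion_general
    (hcox mi mj : ℕ) (hmi : 1 ≤ mi) (hsum : mi + mj = hcox)
    (η : ℝ) (lam : ℝ) (hlam : 0 < lam) :
    ∃ r > 0, ∀ s : ℝ, 0 < s → s < r →
      η / s ^ 2 +
        ∑' k : ℕ,
          (η * (-1) ^ k * (1 - (mi : ℝ) / hcox) *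
            (Real.Gamma ((mi : ℝ) / hcox + k + 1) /
              ((k.factorial : ℝ) * (k + 2) * Real.Gamma ((mi : ℝ) / hcox))) *
            lam ^ (-(k : ℝ) - 2)) * s ^ k
      = η * (lam + s) ^ (-((mi : ℝ) / hcox)) * lam ^ (-((mj : ℝ) / hcox)) *
          (((mi : ℝ) / hcox) * (lam + s) + ((mj : ℝ) / hcox) * lam) /
          ((lam + s) - lam) ^ 2 := by
  have hh : (0 : ℝ) < hcox := by exact_mod_cast (by omega : 0 < hcox)
  set a : ℝ := (mi : ℝ) / hcox
  have ha : 0 < a := by positivity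
  have ha' : ∀ m : ℕ, a ≠ -m := fun m h => (neg_nonpos.2 m.cast_nonneg).not_gt (h ▸ ha)
  have hmj : (mj : ℝ) / hcox = 1 - a := by
    rw [eq_sub_iff_add_eq, ← add_div, ← Nat.cast_add, add_comm, hsum, div_self hh.ne']
  refine ⟨lam, hlam, fun s hs hslt => ?_⟩
  have hx : |s / lam| < 1 := by
    rw [abs_of_pos (by positivity), div_lt_one hlam]; exact hslt
  have hterm : ∀ k : ℕ, (η * (-1) ^ k * (1 - a) * (Gamma (a + k + 1) /
      ((k.factorial : ℝ) * (k + 2) * Gamma a)) * lam ^ (-(k : ℝ) - 2)) * s ^ k =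
      η / s ^ 2 * ((Ring.choose (-a) (k + 2) - -a * Ring.choose (-a) (k + 1)) *
        (s / lam) ^ (k + 2)) := fun k => by
    rw [neg_mul, sub_neg_eq_add, choose_neg_add_mul_choose_neg ha',
      show -(k : ℝ) - 2 = -((k + 2 : ℕ) : ℝ) by push_cast; ring, rpow_neg hlam.le,
      rpow_natCast, div_pow]
    field_simp
    ring
  rw [((hasSum_one_sub_mul_mul_one_add_rpow (-a) hx).mul_left (η / s ^ 2)).congr_fun hterm
    |>.tsum_eq, hmj]
  linear_combination
    (-η / s ^ 2) * add_rpow_neg_mul_rpow_neg_one_sub_mul_eq a (s := s) hlam (by linarith)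

/-- Expansion of the propagator `P^{ij}(μ,λ)`: for exponents `m_i + m_j = h`
(`1 ≤ m_i ≤ h-1`), a pairing constant `η`, and `λ > 0`, writing `μ = λ + s`, one
has for all sufficiently small `s > 0`
`P^{ij}(μ,λ) = η/s² + Σ_{k≥0} P_k^{ij}(λ) s^k`, where
`P_k^{ij}(λ) = η (-1)^k (1 - m_i/h) Γ(m_i/h + k + 1)/(k!(k+2)Γ(m_i/h)) λ^{-k-2}`. -/
theorem propagator_expansion
    (hcox mi mj : ℕ) (hmi : 1 ≤ mi) (hmi' : mi ≤ hcox - 1) (hsum : mi + mj = hcox)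
    (η : ℝ) (lam : ℝ) (hlam : 0 < lam) :
    ∃ r > 0, ∀ s : ℝ, 0 < s → s < r →
      η / s ^ 2 +
        ∑' k : ℕ,
          (η * (-1) ^ k * (1 - (mi : ℝ) / hcox) *
            (Real.Gamma ((mi : ℝ) / hcox + k + 1) /
              ((k.factorial : ℝ) * (k + 2) * Real.Gamma ((mi : ℝ) / hcox))) *
            lam ^ (-(k : ℝ) - 2)) * s ^ k
      = η * (lam + s) ^ (-((mi : ℝ) / hcox)) * lam ^ (-((mj : ℝ) / hcox)) *
          (((mi : ℝ) / hcox) * (lam + s) + ((mj : ℝ) / hcox) * lam) /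
          ((lam + s) - lam) ^ 2 :=
  propagator_expansion_general hcox mi mj hmi hsum η lam hlam
end

section
/- The vectors φ^1 = (ζ²e_1 + ζe_2 + e_3)/√3, φ^2 = (-e_1 + e_2 - e_3 + √(-3) e_4)/√6, φ^3 = conjugate of φ^2, φ^4 = conjugate of φ^1 (with ζ = e^{πi/3}) form a basis of C^4 of eigenvectors of the D_4 Coxeter transformation σ = R_1R_2R_3R_4 with eigenvalues ζ, ζ³, ζ³, ζ⁵ respectively, and satisfy (φ^i | φ^j) = δ_{i+j,5}, where (·|·) is the C-bilinear extension of the standard inner product on R^4. -/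
open Complex

/-- The reflection `R_a(x) = x - (x|a) a` in a root `a` of squared length 2,
with respect to the standard bilinear form on `ℂ⁴`. -/
noncomputable def reflFun (a : Fin 4 → ℂ) (x : Fin 4 → ℂ) : Fin 4 → ℂ :=
  x - (∑ k, x k * a k) • a

/-- The Coxeter transformation `σ = R_1 R_2 R_3 R_4` of the `D_4` root lattice. -/
noncomputable def coxD4 : (Fin 4 → ℂ) → (Fin 4 → ℂ) :=
  fun x => reflFun ![1, -1, 0, 0]
    (reflFun ![0, 1, -1, 0]
      (reflFun ![0, 0, 1, -1]
        (reflFun ![0, 0, 1, 1] x)))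

/-- `ζ = e^{πi/3}`. -/
noncomputable def zetaD4 : ℂ := Complex.exp (Real.pi * Complex.I / 3)

/-- The eigenvectors `φ^1 = (ζ²e₁+ζe₂+e₃)/√3`, `φ^2 = (-e₁+e₂-e₃+√-3 e₄)/√6`,
`φ^3 = conj φ^2`, `φ^4 = conj φ^1` of the `D_4` Coxeter transformation. -/
noncomputable def phiD4 : Fin 4 → (Fin 4 → ℂ) :=
  ![((Real.sqrt 3 : ℂ))⁻¹ • ![zetaD4 ^ 2, zetaD4, 1, 0],
    ((Real.sqrt 6 : ℂ))⁻¹ • ![-1, 1, -1, Complex.I * Real.sqrt 3],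
    fun k => (starRingEnd ℂ)
      ((((Real.sqrt 6 : ℂ))⁻¹ • ![-1, 1, -1, Complex.I * Real.sqrt 3] : Fin 4 → ℂ) k),
    fun k => (starRingEnd ℂ)
      ((((Real.sqrt 3 : ℂ))⁻¹ • ![zetaD4 ^ 2, zetaD4, 1, 0] : Fin 4 → ℂ) k)]

/-!
The Coxeter transformation acts as the signed permutation `x ↦ (-x₃, x₁, x₂, -x₄)`, so it
preserves the bilinear form `(·|·)` and commutes with complex conjugation. The eigenvector
equations for `φ^1` and `φ^2` are direct checks using `ζ³ = -1`; conjugating them gives those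
for `φ^4` and `φ^3`, because `conj ζ = ζ⁵` and `ζ³` is real.

Since `σ` preserves `(·|·)`, eigenvectors for eigenvalues `λ, μ` with `λ μ ≠ 1` are orthogonal.
The eigenvalues are powers of the primitive sixth root `ζ`, so only the pairings whose exponents
sum to `6` have to be computed: `(φ^1|φ^4)` and those among `φ^2, φ^3`. Finally, the vectors
`φ^{5-i}` form a dual family to the `φ^j`, which gives linear independence.
-/

open Matrix ComplexConjugate

theorem linearIndependent_of_dotProduct_eq_ite {R ι n : Type*} [CommRing R] [DecidableEq ι]
    [Fintype n] (v w : ι → n → R) (h : ∀ i j, w i ⬝ᵥ v j = if i = j then 1 else 0) :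
    LinearIndependent R v := by
  classical
  exact .of_pairwise_dual_eq_zero_one v (fun i ↦ dotProductEquiv R n (w i))
    (fun i j hij ↦ by simp [h, hij]) (fun i ↦ by simp [h])

theorem dotProduct_eq_zero_of_eq_smul_of_mul_ne_one {R n : Type*} [CommRing R]
    [NoZeroDivisors R] [Fintype n] {f : (n → R) → n → R}
    (hf : ∀ x y, f x ⬝ᵥ f y = x ⬝ᵥ y) {x y : n → R} {a b : R} (hx : f x = a • x)
    (hy : f y = b • y) (hab : a * b ≠ 1) : x ⬝ᵥ y = 0 := by
  have h : a * b * (x ⬝ᵥ y) = x ⬝ᵥ y := by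
    rw [← smul_eq_mul, mul_smul, ← dotProduct_smul, ← smul_dotProduct, ← hx, ← hy, hf]
  by_contra hxy
  exact hab ((mul_eq_right₀ hxy).mp h)

lemma isPrimitiveRoot_zetaD4 : IsPrimitiveRoot zetaD4 6 := by
  rw [zetaD4]
  convert Complex.isPrimitiveRoot_exp 6 (by norm_num) using 2
  push_cast; ring

lemma zetaD4_pow_three : zetaD4 ^ 3 = -1 :=
  (isPrimitiveRoot_zetaD4.pow_of_dvd (by norm_num) (by norm_num)).eq_neg_one_of_two_right

lemma conj_zetaD4 : conj zetaD4 = zetaD4 ^ 5 := by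
  have h6 : zetaD4 ^ 6 = 1 := isPrimitiveRoot_zetaD4.pow_eq_one
  have hnorm : conj zetaD4 * zetaD4 = 1 := by
    rw [conj_mul', isPrimitiveRoot_zetaD4.norm'_eq_one (by norm_num)]; simp
  linear_combination (-conj zetaD4) * h6 + zetaD4 ^ 5 * hnorm

lemma coxD4_apply (x : Fin 4 → ℂ) : coxD4 x = ![-x 2, x 0, x 1, -x 3] := by
  ext k
  fin_cases k <;> simp [coxD4, reflFun, Fin.sum_univ_four, vecHead, vecTail]

lemma coxD4_dotProduct_coxD4 (x y : Fin 4 → ℂ) : coxD4 x ⬝ᵥ coxD4 y = x ⬝ᵥ y := by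
  simp only [coxD4_apply, dotProduct, Fin.sum_univ_four, cons_val, mul_neg, neg_mul, neg_neg]
  ring

lemma coxD4_smul (c : ℂ) (x : Fin 4 → ℂ) : coxD4 (c • x) = c • coxD4 x := by
  simp only [coxD4_apply]; ext k; fin_cases k <;> simp

lemma coxD4_star (x : Fin 4 → ℂ) : coxD4 (star x) = star (coxD4 x) := by
  simp only [coxD4_apply]; ext k; fin_cases k <;> simp

lemma coxD4_star_of_eq_smul {x : Fin 4 → ℂ} {μ : ℂ} (h : coxD4 x = μ • x) :
    coxD4 (star x) = star μ • star x := by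
  rw [coxD4_star, h, star_smul]

lemma coxD4_eq_smul_of_pow_three {μ : ℂ} (hμ : μ ^ 3 = -1) :
    coxD4 ![μ ^ 2, μ, 1, 0] = μ • ![μ ^ 2, μ, 1, 0] := by
  rw [coxD4_apply]; ext k; fin_cases k <;> simp [← hμ] <;> ring

lemma coxD4_eq_neg_one_smul (b : ℂ) : coxD4 ![-1, 1, -1, b] = (-1 : ℂ) • ![-1, 1, -1, b] := by
  rw [coxD4_apply]; ext k; fin_cases k <;> simp

lemma phiD4_zero : phiD4 0 = (Real.sqrt 3 : ℂ)⁻¹ • ![zetaD4 ^ 2, zetaD4, 1, 0] := rfl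

lemma phiD4_one : phiD4 1 = (Real.sqrt 6 : ℂ)⁻¹ • ![-1, 1, -1, I * Real.sqrt 3] := rfl

lemma phiD4_two : phiD4 2 = star (phiD4 1) := rfl

lemma phiD4_three : phiD4 3 = star (phiD4 0) := rfl

lemma coxD4_phiD4 (j : Fin 4) : coxD4 (phiD4 j) = zetaD4 ^ (![1, 3, 3, 5] j) • phiD4 j := by
  have h0 : coxD4 (phiD4 0) = zetaD4 • phiD4 0 := by
    rw [phiD4_zero, coxD4_smul, coxD4_eq_smul_of_pow_three zetaD4_pow_three, smul_comm]
  have h1 : coxD4 (phiD4 1) = zetaD4 ^ 3 • phiD4 1 := by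
    rw [phiD4_one, coxD4_smul, coxD4_eq_neg_one_smul, zetaD4_pow_three, smul_comm]
  fin_cases j
  · simpa using h0
  · exact h1
  · simpa [phiD4_two, zetaD4_pow_three] using coxD4_star_of_eq_smul h1
  · simpa [phiD4_three, ← conj_zetaD4] using coxD4_star_of_eq_smul h0

lemma phiD4_dotProduct_eq_zero {i j : Fin 4} (h : ¬ 6 ∣ ![1, 3, 3, 5] i + ![1, 3, 3, 5] j) :
    phiD4 i ⬝ᵥ phiD4 j = 0 := by
  refine dotProduct_eq_zero_of_eq_smul_of_mul_ne_one coxD4_dotProduct_coxD4 (coxD4_phiD4 i)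
    (coxD4_phiD4 j) ?_
  rwa [← pow_add, Ne, isPrimitiveRoot_zetaD4.pow_eq_one_iff_dvd]

lemma ofReal_sqrt_three_sq : (Real.sqrt 3 : ℂ) ^ 2 = 3 := by
  norm_cast; simp

lemma ofReal_sqrt_six_sq : (Real.sqrt 6 : ℂ) ^ 2 = 6 := by
  norm_cast; simp

lemma phiD4_zero_dotProduct_three : phiD4 0 ⬝ᵥ phiD4 3 = 1 := by
  simp only [phiD4_three, phiD4_zero, dotProduct, Fin.sum_univ_four, Pi.star_apply,
    Pi.smul_apply, smul_eq_mul, RCLike.star_def, map_mul, map_inv₀, map_pow, map_one, conj_ofReal,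
    conj_zetaD4, cons_val]
  field_simp
  linear_combination (zetaD4 ^ 6 + 2) * isPrimitiveRoot_zetaD4.pow_eq_one - ofReal_sqrt_three_sq

lemma phiD4_one_dotProduct_one : phiD4 1 ⬝ᵥ phiD4 1 = 0 := by
  simp only [phiD4_one, dotProduct, Fin.sum_univ_four, Pi.smul_apply, smul_eq_mul, cons_val]
  field_simp
  linear_combination I ^ 2 * ofReal_sqrt_three_sq + 3 * I_sq

lemma phiD4_one_dotProduct_two : phiD4 1 ⬝ᵥ phiD4 2 = 1 := by
  simp only [phiD4_two, phiD4_one, dotProduct, Fin.sum_univ_four, Pi.star_apply,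
    Pi.smul_apply, smul_eq_mul, RCLike.star_def, map_mul, map_neg, map_inv₀, map_one, conj_ofReal,
    conj_I, cons_val]
  field_simp
  linear_combination -I ^ 2 * ofReal_sqrt_three_sq - 3 * I_sq - ofReal_sqrt_six_sq

lemma phiD4_dotProduct (i j : Fin 4) :
    phiD4 i ⬝ᵥ phiD4 j = if ((i : ℕ) + 1) + ((j : ℕ) + 1) = 5 then 1 else 0 := by
  have h22 : phiD4 2 ⬝ᵥ phiD4 2 = 0 := by
    rw [phiD4_two, star_dotProduct_star, phiD4_one_dotProduct_one, star_zero]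
  fin_cases i <;> fin_cases j
  all_goals first
    | exact phiD4_dotProduct_eq_zero (by decide)
    | simp [phiD4_zero_dotProduct_three, phiD4_one_dotProduct_one, phiD4_one_dotProduct_two, h22,
        dotProduct_comm (phiD4 3), dotProduct_comm (phiD4 2)]

lemma phiD4_rev_dotProduct (i j : Fin 4) :
    phiD4 i.rev ⬝ᵥ phiD4 j = if i = j then 1 else 0 := by
  rw [phiD4_dotProduct, Fin.val_rev]
  congr 1
  simp only [Fin.ext_iff, eq_iff_iff]
  omega

/-- The vectors `φ^1, …, φ^4` form a basis of `ℂ⁴` of eigenvectors of the `D_4`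
Coxeter transformation with eigenvalues `ζ, ζ³, ζ³, ζ⁵`, and satisfy
`(φ^i | φ^j) = δ_{i+j,5}` for the bilinear extension of the standard inner
product. -/
theorem phiD4_eigenbasis :
    LinearIndependent ℂ phiD4 ∧
    (∀ j, coxD4 (phiD4 j) = zetaD4 ^ (![1, 3, 3, 5] j) • phiD4 j) ∧
    (∀ i j : Fin 4, (∑ k, phiD4 i k * phiD4 j k) =
      if ((i : ℕ) + 1) + ((j : ℕ) + 1) = 5 then 1 else 0) := by
  exact ⟨linearIndependent_of_dotProduct_eq_ite phiD4 (phiD4 ∘ Fin.rev) phiD4_rev_dotProduct,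
    coxD4_phiD4, phiD4_dotProduct⟩
end
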